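/- Let m > 2 and let H : ℝ → ℝ be differentiable and strictly positive on (-1, ∞), suppose x ↦ 1/H(x) is integrable on (z, ∞) for every z > -1 but not integrable on (-1, b] for any b > -1, suppose H(z)/(1+z) tends to 0 as z → -1⁺, and suppose that (1+z)·H'(z)/H(z) tends to m/2 as z → -1⁺. Define H_p(z) = (1+z)⁻¹ ∫_z^∞ dx/H(x). Then the recession velocity of the particle horizon H_p(z)·H(z) tends to 2/(m-2) as z → -1⁺; equivalently, the particle horizon velocity dH_p/dt = H_p(z)H(z) + 1 tends to m/(m-2) at the far future. -/

import Mathlib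

/-!
Writing `H_p(z) H(z) = F(z) / G(z)` with `F(z) = ∫_z^∞ dx/H(x)` and `G(z) = (1+z)/H(z)`, the
condition `H(z)/(1+z) → 0` makes `G → ∞` as `z → -1⁺`, so L'Hôpital's rule in its `∞/∞` form
applies. The ratio of derivatives is `F'/G' = ((1+z)H'/H - 1)⁻¹ → (m/2 - 1)⁻¹ = 2/(m-2)`.
-/

open MeasureTheory Filter Set Topology

theorem abs_sub_sub_mul_sub_le_of_deriv_ratio {f f' g g' : ℝ → ℝ} {a b L δ : ℝ} (hab : a < b)
    (hfc : ContinuousOn f (Icc a b)) (hff' : ∀ x ∈ Ioo a b, HasDerivAt f (f' x) x)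
    (hgc : ContinuousOn g (Icc a b)) (hgg' : ∀ x ∈ Ioo a b, HasDerivAt g (g' x) x)
    (hg' : ∀ x ∈ Ioo a b, g' x ≠ 0) (hδ : ∀ x ∈ Ioo a b, |f' x / g' x - L| ≤ δ) :
    |f b - f a - L * (g b - g a)| ≤ δ * |g b - g a| := by
  obtain ⟨c, hc, hcauchy⟩ := exists_ratio_hasDerivAt_eq_ratio_slope f f' hab hfc hff' g g' hgc hgg'
  have hsplit : f b - f a - L * (g b - g a) = (g b - g a) * (f' c / g' c - L) := by
    field_simp [hg' c hc]
    linear_combination -hcauchy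
  rw [hsplit, abs_mul, mul_comm δ]
  exact mul_le_mul_of_nonneg_left (hδ c hc) (abs_nonneg _)

theorem HasDerivAt.lhopital_atTop_nhdsGT {f f' g g' : ℝ → ℝ} {a L : ℝ}
    (hff' : ∀ᶠ x in 𝓝[>] a, HasDerivAt f (f' x) x)
    (hgg' : ∀ᶠ x in 𝓝[>] a, HasDerivAt g (g' x) x)
    (hg' : ∀ᶠ x in 𝓝[>] a, g' x ≠ 0)
    (hg : Tendsto g (𝓝[>] a) atTop)
    (hdiv : Tendsto (fun x => f' x / g' x) (𝓝[>] a) (𝓝 L)) :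
    Tendsto (fun x => f x / g x) (𝓝[>] a) (𝓝 L) := by
  rw [Metric.tendsto_nhds]
  intro ε hε
  set δ := ε / 2
  obtain ⟨u, hau : a < u, hu⟩ := mem_nhdsGT_iff_exists_Ioo_subset.1 <|
    hff'.and <| hgg'.and <| hg'.and <| hdiv.eventually (Metric.closedBall_mem_nhds L (half_pos hε))
  obtain ⟨b, hab, hbu⟩ := exists_between hau
  have hbound : ∀ z ∈ Ioo a b, g z ≠ 0 →
      |f z / g z - L| ≤ |f b - L * g b| * |(g z)⁻¹| + δ * |g b * (g z)⁻¹ - 1| := by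
    intro z hz hgz
    have hzb : ∀ x ∈ Icc z b, HasDerivAt f (f' x) x ∧ HasDerivAt g (g' x) x ∧ g' x ≠ 0 ∧
        dist (f' x / g' x) L ≤ δ := fun x hx => hu (Icc_subset_Ioo hz.1 hbu hx)
    have hzb' : ∀ x ∈ Ioo z b, _ := fun x hx => hzb x (Ioo_subset_Icc_self hx)
    have hmvt := abs_sub_sub_mul_sub_le_of_deriv_ratio hz.2
      (fun x hx => (hzb x hx).1.continuousAt.continuousWithinAt) (fun x hx => (hzb' x hx).1)
      (fun x hx => (hzb x hx).2.1.continuousAt.continuousWithinAt) (fun x hx => (hzb' x hx).2.1)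
      (fun x hx => (hzb' x hx).2.2.1) (fun x hx => (hzb' x hx).2.2.2)
    calc |f z / g z - L|
        = |(f b - L * g b) * (g z)⁻¹ - (f b - f z - L * (g b - g z)) * (g z)⁻¹| := by
          congr 1; field_simp; ring
      _ ≤ |f b - L * g b| * |(g z)⁻¹| + |f b - f z - L * (g b - g z)| * |(g z)⁻¹| := by
          rw [← abs_mul, ← abs_mul]; exact abs_sub _ _
      _ ≤ |f b - L * g b| * |(g z)⁻¹| + δ * |g b - g z| * |(g z)⁻¹| := by gcongr
      _ = |f b - L * g b| * |(g z)⁻¹| + δ * |g b * (g z)⁻¹ - 1| := by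
          rw [mul_assoc, ← abs_mul (g b - g z), sub_mul, mul_inv_cancel₀ hgz]
  have hlim : Tendsto (fun z => |f b - L * g b| * |(g z)⁻¹| + δ * |g b * (g z)⁻¹ - 1|)
      (𝓝[>] a) (𝓝 δ) := by
    have hinv := hg.inv_tendsto_atTop
    simpa using ((hinv.abs.const_mul _).add (((hinv.const_mul (g b)).sub_const 1).abs.const_mul δ))
  filter_upwards [Ioo_mem_nhdsGT hab, hg.eventually_gt_atTop 0,
    hlim.eventually (gt_mem_nhds (half_lt_self hε))] with z hz hgz hlt
  rw [Real.dist_eq]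
  exact (hbound z hz hgz.ne').trans_lt hlt

theorem hasDerivAt_integral_Ioi {E : Type*} [NormedAddCommGroup E] [NormedSpace ℝ E]
    [CompleteSpace E] {f : ℝ → E} {a z : ℝ} (hf : IntegrableOn f (Ioi a)) (haz : a < z)
    (hfz : ContinuousAt f z) :
    HasDerivAt (fun y => ∫ x in Ioi y, f x) (-f z) z := by
  have hI : HasDerivAt (fun y => ∫ x in a..y, f x) (f z) z :=
    intervalIntegral.integral_hasDerivAt_right
      ((intervalIntegrable_iff_integrableOn_Ioc_of_le haz.le).2 (hf.mono_set Ioc_subset_Ioi_self))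
      ⟨Ioi a, Ioi_mem_nhds haz, hf.aestronglyMeasurable⟩ hfz
  refine (hI.const_sub (∫ x in Ioi a, f x)).congr_of_eventuallyEq ?_
  filter_upwards [Ioi_mem_nhds haz] with y hy
  rw [← intervalIntegral.integral_Ioi_sub_Ioi hf hy.le, sub_sub_cancel]

theorem hasDerivAt_one_add_div {H : ℝ → ℝ} {h' z : ℝ} (hH : HasDerivAt H h' z) (hz : H z ≠ 0) :
    HasDerivAt (fun y => (1 + y) / H y) ((1 - (1 + z) * h' / H z) / H z) z := by
  refine (((hasDerivAt_id z).const_add 1).div hH hz).congr_deriv ?_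
  rw [id]
  field_simp

theorem neg_one_div_div_one_sub_div {h r : ℝ} (hh : h ≠ 0) :
    -(1 / h) / ((1 - r) / h) = (r - 1)⁻¹ := by
  rw [← neg_div, div_div_div_cancel_right₀ hh, neg_div, ← div_neg, neg_sub, one_div]

theorem particleHorizon_velocity_far_future_general
    (m : ℝ) (hm : 2 < m)
    (H H' : ℝ → ℝ)
    (hHderiv : ∀ z ∈ Set.Ioi (-1 : ℝ), HasDerivAt H (H' z) z)
    (hHpos : ∀ x ∈ Set.Ioi (-1 : ℝ), 0 < H x)
    (hint : ∀ z : ℝ, -1 < z → IntegrableOn (fun x => 1 / H x) (Set.Ioi z))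
    (hHratio : Tendsto (fun z => H z / (1 + z)) (nhdsWithin (-1) (Set.Ioi (-1))) (nhds 0))
    (hlog : Tendsto (fun z => (1 + z) * H' z / H z)
      (nhdsWithin (-1) (Set.Ioi (-1))) (nhds (m / 2)))
    (Hp : ℝ → ℝ)
    (hHp : ∀ z : ℝ, Hp z = (1 + z)⁻¹ * ∫ x in Set.Ioi z, 1 / H x) :
    Tendsto (fun z => Hp z * H z) (nhdsWithin (-1) (Set.Ioi (-1))) (nhds (2 / (m - 2))) ∧
    Tendsto (fun z => Hp z * H z + 1) (nhdsWithin (-1) (Set.Ioi (-1))) (nhds (m / (m - 2))) := by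
  have hF : ∀ᶠ z in 𝓝[>] (-1 : ℝ), HasDerivAt (fun y => ∫ x in Ioi y, 1 / H x) (-(1 / H z)) z := by
    filter_upwards [self_mem_nhdsWithin] with z (hz : -1 < z)
    obtain ⟨a, ha, haz⟩ := exists_between hz
    exact hasDerivAt_integral_Ioi (hint a ha) haz
      (continuousAt_const.div (hHderiv z hz).continuousAt (hHpos z hz).ne')
  have hG : ∀ᶠ z in 𝓝[>] (-1 : ℝ),
      HasDerivAt (fun y => (1 + y) / H y) ((1 - (1 + z) * H' z / H z) / H z) z := by
    filter_upwards [self_mem_nhdsWithin] with z hz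
    exact hasDerivAt_one_add_div (hHderiv z hz) (hHpos z hz).ne'
  have hG' : ∀ᶠ z in 𝓝[>] (-1 : ℝ), (1 - (1 + z) * H' z / H z) / H z ≠ 0 := by
    filter_upwards [self_mem_nhdsWithin, hlog.eventually_ne (by linarith : m / 2 ≠ 1)] with z hz hr
    exact div_ne_zero (sub_ne_zero.2 hr.symm) (hHpos z hz).ne'
  have hGtop : Tendsto (fun z => (1 + z) / H z) (𝓝[>] (-1 : ℝ)) atTop := by
    have hpos : ∀ᶠ z in 𝓝[>] (-1 : ℝ), 0 < H z / (1 + z) := by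
      filter_upwards [self_mem_nhdsWithin] with z (hz : -1 < z)
      exact div_pos (hHpos z hz) (by linarith)
    exact (tendsto_nhdsWithin_iff.2 ⟨hHratio, hpos⟩).inv_tendsto_nhdsGT_zero.congr fun z =>
      inv_div _ _
  have hratio : Tendsto (fun z => -(1 / H z) / ((1 - (1 + z) * H' z / H z) / H z))
      (𝓝[>] (-1 : ℝ)) (𝓝 (2 / (m - 2))) := by
    have hlim := (hlog.sub_const 1).inv₀ (by linarith : m / 2 - 1 ≠ 0)
    rw [show (m / 2 - 1)⁻¹ = 2 / (m - 2) by field_simp] at hlim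
    refine hlim.congr' ?_
    filter_upwards [self_mem_nhdsWithin] with z hz
    exact (neg_one_div_div_one_sub_div (hHpos z hz).ne').symm
  have hvel : Tendsto (fun z => Hp z * H z) (𝓝[>] (-1 : ℝ)) (𝓝 (2 / (m - 2))) := by
    refine (HasDerivAt.lhopital_atTop_nhdsGT hF hG hG' hGtop hratio).congr fun z => ?_
    rw [hHp, div_div_eq_mul_div]
    ring
  refine ⟨hvel, ?_⟩
  convert hvel.add_const 1 using 2
  field_simp [show m - 2 ≠ 0 by linarith]
  ring

/-- Recession velocity of the particle horizon at the far future, case `m > 2`: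
if `∫_{-1}^b dx/H(x)` diverges for every `b > -1`, `H(z)/(1+z) → 0` and
`(1+z)H'(z)/H(z) → m/2` as `z → -1⁺`, then `H_p(z)·H(z) → 2/(m-2)` as `z → -1⁺`;
equivalently, the particle horizon velocity `dH_p/dt = H_p·H + 1 → m/(m-2)`
at the far future. -/
theorem particleHorizon_velocity_far_future
    (m : ℝ) (hm : 2 < m)
    (H H' : ℝ → ℝ)
    (hHderiv : ∀ z ∈ Set.Ioi (-1 : ℝ), HasDerivAt H (H' z) z)
    (hHpos : ∀ x ∈ Set.Ioi (-1 : ℝ), 0 < H x)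
    (hint : ∀ z : ℝ, -1 < z → IntegrableOn (fun x => 1 / H x) (Set.Ioi z))
    (hdiv : ∀ b : ℝ, -1 < b → ¬ IntegrableOn (fun x => 1 / H x) (Set.Ioc (-1) b))
    (hHratio : Tendsto (fun z => H z / (1 + z)) (nhdsWithin (-1) (Set.Ioi (-1))) (nhds 0))
    (hlog : Tendsto (fun z => (1 + z) * H' z / H z)
      (nhdsWithin (-1) (Set.Ioi (-1))) (nhds (m / 2)))
    (Hp : ℝ → ℝ)
    (hHp : ∀ z : ℝ, Hp z = (1 + z)⁻¹ * ∫ x in Set.Ioi z, 1 / H x) :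
    Tendsto (fun z => Hp z * H z) (nhdsWithin (-1) (Set.Ioi (-1))) (nhds (2 / (m - 2))) ∧
    Tendsto (fun z => Hp z * H z + 1) (nhdsWithin (-1) (Set.Ioi (-1))) (nhds (m / (m - 2))) :=
  particleHorizon_velocity_far_future_general m hm H H' hHderiv hHpos hint hHratio hlog Hp hHp
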